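/- For integers n+1 ≤ k ≤ n(n+1)/2 with k ≠ n(n+1)/2 − 1, letting i_0 be the greatest integer with k − 1 ≥ n + (n−1) + ⋯ + (n−i_0), the number C(n,k) of permutations in S_n whose record positions sum to k satisfies (n−i_0−1)!/(n·e^n) ≤ C(n,k) ≤ 2^n · (n−i_0−1)!. -/

import Mathlib

/-- Position `j` (0-indexed) is a record position of `σ`. -/
def IsRecordPos {n : ℕ} (σ : Equiv.Perm (Fin n)) (j : Fin n) : Prop :=
  ∀ i, i < j → σ i < σ j

instance {n : ℕ} (σ : Equiv.Perm (Fin n)) : DecidablePred (IsRecordPos σ) := by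
  unfold IsRecordPos; infer_instance

/-- The number of records of `σ`. -/
def recCount {n : ℕ} (σ : Equiv.Perm (Fin n)) : ℕ :=
  (Finset.univ.filter (fun j => IsRecordPos σ j)).card

/-- The sum of the (1-indexed) positions of the records of `σ`. -/
def srec {n : ℕ} (σ : Equiv.Perm (Fin n)) : ℕ :=
  ∑ j ∈ Finset.univ.filter (fun j => IsRecordPos σ j), (j.1 + 1)

/-- `srecCount n k`: the number of permutations of `S_n` whose record positions
sum to `k`. -/
def srecCount (n k : ℕ) : ℕ :=
  (Finset.univ.filter (fun σ : Equiv.Perm (Fin n) => srec σ = k)).card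


namespace SrecAux

open Finset

def T (t : ℕ) : ℕ := t * (t + 1) / 2

lemma two_T (t : ℕ) : 2 * T t = t * (t + 1) := by
  have : 2 ∣ t * (t + 1) := (Nat.even_mul_succ_self t).two_dvd
  unfold T; omega

lemma T_succ (t : ℕ) : T (t + 1) = T t + (t + 1) := by
  have h1 := two_T t; have h2 := two_T (t + 1); nlinarith [h1, h2]

lemma T_mono : Monotone T := by
  apply monotone_nat_of_le_succ
  intro n; rw [T_succ]; omega

lemma T_ge (t : ℕ) : t ≤ T t := by
  have := two_T t; nlinarith

lemma sum_Icc_id (M : ℕ) : (∑ x ∈ Icc 1 M, x) = T M := by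
  induction M with
  | zero => simp [T]
  | succ M ih => rw [Finset.sum_Icc_succ_top (by omega), ih, T_succ]

lemma prod_Icc_id (M : ℕ) : (∏ x ∈ Icc 1 M, x) = Nat.factorial M := by
  rw [← Finset.Ico_add_one_right_eq_Icc]; exact Finset.prod_Ico_id_eq_factorial M

lemma pos_of_mem {A : Finset ℕ} (h0 : 0 ∉ A) {x : ℕ} (hx : x ∈ A) : 1 ≤ x :=
  Nat.pos_of_ne_zero (by rintro rfl; exact h0 hx)

/-- 2·∏ ≥ ∑ + 1 for finsets of positive naturals -/
lemma two_prod_ge (A : Finset ℕ) (h0 : 0 ∉ A) : (∑ a ∈ A, a) + 1 ≤ 2 * ∏ a ∈ A, a := by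
  induction A using Finset.strongInduction with
  | _ A ih =>
    rcases A.eq_empty_or_nonempty with rfl | hA
    · simp
    · set a := A.max' hA with ha
      have haA : a ∈ A := A.max'_mem hA
      have ha1 : 1 ≤ a := pos_of_mem h0 haA
      have hsum := Finset.add_sum_erase A id haA
      have hprod := Finset.mul_prod_erase A id haA
      have h0' : 0 ∉ A.erase a := fun h => h0 (Finset.erase_subset _ _ h)
      have hIH := ih (A.erase a) (Finset.erase_ssubset haA) h0'
      simp only [id] at hsum hprod
      rcases (A.erase a).eq_empty_or_nonempty with he | he
      · rw [he] at hsum hprod; simp at hsum hprod; omega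
      · obtain ⟨b, hb⟩ := he
        have hbA : b ∈ A := Finset.mem_of_mem_erase hb
        have hb1 : 1 ≤ b := pos_of_mem h0 hbA
        have hba : b ≠ a := Finset.ne_of_mem_erase hb
        have hble : b ≤ a := A.le_max' b hbA
        have ha2 : 2 ≤ a := by omega
        have hs1 : 1 ≤ ∑ x ∈ A.erase a, x :=
          le_trans hb1 (Finset.single_le_sum (fun i _ => Nat.zero_le i) hb)
        nlinarith [hIH, hsum, hprod]

set_option maxHeartbeats 1000000 in
/-- key combinatorial bound -/
lemma PTC (A : Finset ℕ) (h0 : 0 ∉ A) : ∀ M δ : ℕ,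
    (∑ a ∈ A, a) + 1 + δ = T M → δ + 1 ≤ M →
    (δ + 2) * (∏ a ∈ A, a) ≤ 2 * Nat.factorial M := by
  induction A using Finset.strongInduction with
  | _ A ih =>
    intro M δ hsum hδ
    rcases A.eq_empty_or_nonempty with rfl | hA
    · simp only [Finset.sum_empty, Finset.prod_empty, mul_one] at *
      have h2 := two_T M
      have hM : M = 1 := by nlinarith
      subst hM
      have : δ = 0 := by omega
      simp [this, Nat.factorial]
    · set a := A.max' hA with ha
      have haA : a ∈ A := A.max'_mem hA
      have ha1 : 1 ≤ a := pos_of_mem h0 haA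
      have hsumA := Finset.add_sum_erase A id haA
      have hprodA := Finset.mul_prod_erase A id haA
      simp only [id] at hsumA hprodA
      rcases Nat.lt_or_ge M a with hbig | hsmall
      · -- case a ≥ M + 1
        have h0' : 0 ∉ A.erase a := fun h => h0 (Finset.erase_subset _ _ h)
        set s' := ∑ x ∈ A.erase a, x with hs'
        have hex : ∃ t, s' < T t := ⟨s' + 1, by have := T_ge (s' + 1); omega⟩
        obtain ⟨M', hM'spec, hM'min⟩ : ∃ m, s' < T m ∧ ∀ l, l < m → ¬ s' < T l :=
          ⟨Nat.find hex, Nat.find_spec hex, fun l hl => Nat.find_min hex hl⟩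
        have hM'1 : 1 ≤ M' := by
          rcases Nat.eq_zero_or_pos M' with h | h
          · exfalso; rw [h] at hM'spec; simp [T] at hM'spec
          · exact h
        have hM'min' : ¬ s' < T (M' - 1) := hM'min _ (by omega)
        obtain ⟨δ', hsum'⟩ : ∃ d, s' + 1 + d = T M' := ⟨T M' - (s' + 1), by omega⟩
        have hTM' : T M' = T (M' - 1) + M' := by
          have := T_succ (M' - 1); rw [Nat.sub_add_cancel hM'1] at this; omega
        have hδ'M : δ' + 1 ≤ M' := by omega
        have hIH := ih (A.erase a) (Finset.erase_ssubset haA) h0' M' δ' hsum' hδ'M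
        have hMM' : M' + 1 ≤ M := by
          by_contra hc
          have h2 : T (M - 1) ≤ T (M' - 1) := T_mono (by omega)
          have h3 : T M = T (M - 1) + M := by
            have := T_succ (M - 1)
            rw [Nat.sub_add_cancel (by omega : 1 ≤ M)] at this; omega
          omega
        have hprodA' : (∏ x ∈ A, x) = a * ∏ x ∈ A.erase a, x := hprodA.symm
        rcases (by omega : M = M' + 1 ∨ M = M' + 2 ∨ M' + 3 ≤ M) with hq | hq | hq
        · -- q = 1
          subst hq
          have hTrel : T (M' + 1) = T M' + (M' + 1) := T_succ M'
          have hkey : a + δ = (M' + 1) + δ' := by omega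
          have hδM : δ + 2 ≤ M' + 1 := by omega
          obtain ⟨x, hx⟩ : ∃ x, a = M' + 1 + x := ⟨a - (M' + 1), by omega⟩
          obtain ⟨y, hy⟩ : ∃ y, δ + 2 + y = M' + 1 := ⟨M' + 1 - (δ + 2), by omega⟩
          have hineq : a * (δ + 2) ≤ (M' + 1) * (δ' + 2) := by
            have e2 : δ' = δ + x := by omega
            have e3 : M' + 1 = δ + 2 + y := by omega
            have h1 : (M' + 1) * (δ' + 2) = a * (δ + 2) + x * y := by
              rw [e2, hx, e3]; ring
            linarith [Nat.zero_le (x * y)]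
          calc (δ + 2) * (∏ x ∈ A, x) = (a * (δ + 2)) * ∏ x ∈ A.erase a, x := by
                rw [hprodA']; ring
            _ ≤ ((M' + 1) * (δ' + 2)) * ∏ x ∈ A.erase a, x :=
                Nat.mul_le_mul_right _ hineq
            _ = (M' + 1) * ((δ' + 2) * ∏ x ∈ A.erase a, x) := by ring
            _ ≤ (M' + 1) * (2 * Nat.factorial M') := Nat.mul_le_mul_left _ hIH
            _ = 2 * Nat.factorial (M' + 1) := by rw [Nat.factorial_succ]; ring
        · -- q = 2
          subst hq
          have hTrel : T (M' + 2) = T M' + (M' + 1) + (M' + 2) := by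
            have h1 := T_succ M'
            have h2 := T_succ (M' + 1)
            rw [show M' + 1 + 1 = M' + 2 from rfl] at h2
            omega
          have hkey0 : a + δ = (2 * M' + 3) + δ' := by omega
          obtain ⟨u, hu⟩ : ∃ u, δ + u = M' + 1 := ⟨M' + 1 - δ, by omega⟩
          have hineq : a * (δ + 2) ≤ (M' + 1) * (M' + 2) * (δ' + 2) := by
            obtain ⟨N, hN⟩ : ∃ N, M' = N + 1 := ⟨M' - 1, by omega⟩
            subst hN
            have hkey2 : a = N + 3 + δ' + u := by omega
            have h1 : a * (δ + 2) + a * u = a * (N + 4) := by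
              have e : δ + 2 + u = N + 4 := by omega
              calc a * (δ + 2) + a * u = a * ((δ + 2) + u) := by ring
                _ = a * (N + 4) := by rw [e]
            have h2 : a * (N + 4) + (δ' * (N * N + 4 * N + 2) + (N + 3) * N + u * u + δ' * u)
                = (N + 2) * (N + 3) * (δ' + 2) + u + a * u := by
              rw [hkey2]; ring
            have huu : u ≤ u * u := by
              rcases Nat.eq_zero_or_pos u with rfl | h
              · simp
              · exact Nat.le_mul_of_pos_left u h
            have hgoal : a * (δ + 2) ≤ (N + 2) * (N + 3) * (δ' + 2) := by
              linarith [Nat.zero_le (δ' * (N * N + 4 * N + 2)), Nat.zero_le ((N + 3) * N),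
                Nat.zero_le (δ' * u)]
            calc a * (δ + 2) ≤ (N + 2) * (N + 3) * (δ' + 2) := hgoal
              _ = (N + 1 + 1) * (N + 1 + 2) * (δ' + 2) := by ring
          calc (δ + 2) * (∏ x ∈ A, x) = (a * (δ + 2)) * ∏ x ∈ A.erase a, x := by
                rw [hprodA']; ring
            _ ≤ ((M' + 1) * (M' + 2) * (δ' + 2)) * ∏ x ∈ A.erase a, x :=
                Nat.mul_le_mul_right _ hineq
            _ = (M' + 1) * (M' + 2) * ((δ' + 2) * ∏ x ∈ A.erase a, x) := by ring
            _ ≤ (M' + 1) * (M' + 2) * (2 * Nat.factorial M') := Nat.mul_le_mul_left _ hIH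
            _ = 2 * Nat.factorial (M' + 2) := by
                rw [Nat.factorial_succ, Nat.factorial_succ]; ring
        · -- q ≥ 3
          have hM4 : 4 ≤ M := by omega
          have hprod' : (∏ x ∈ A.erase a, x) ≤ Nat.factorial M' := by
            have h2p : 2 * (∏ x ∈ A.erase a, x) ≤ (δ' + 2) * (∏ x ∈ A.erase a, x) :=
              Nat.mul_le_mul_right _ (by omega)
            omega
          have haS : a + δ + 1 ≤ T M := by
            have h1 : a ≤ ∑ x ∈ A, x := by omega
            omega
          have h2T := two_T M
          have hmain : a * (δ + 2) ≤ 2 * ((M - 2) * ((M - 1) * M)) := by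
            obtain ⟨K, rfl⟩ : ∃ K, M = K + 4 := ⟨M - 4, by omega⟩
            rw [show K + 4 - 2 = K + 2 from rfl, show K + 4 - 1 = K + 3 from rfl]
            have hT : (2 : ℤ) * (T (K + 4) : ℤ) = ((K : ℤ) + 4) * ((K : ℤ) + 5) := by
              exact_mod_cast two_T (K + 4)
            have ha : (a : ℤ) + δ + 1 ≤ (T (K + 4) : ℤ) := by exact_mod_cast haS
            have hd : (δ : ℤ) ≤ K + 3 := by exact_mod_cast (show δ ≤ K + 3 by omega)
            have hgoal : (a : ℤ) * (δ + 2) ≤ 2 * ((K + 2) * ((K + 3) * (K + 4))) := by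
              rcases le_or_gt ((a : ℤ) + δ) (2 * K + 7) with hs | hs
              · have hsq : (4 : ℤ) * (a * (δ + 2)) ≤ (a + δ + 2) * (a + δ + 2) := by
                  nlinarith [sq_nonneg ((a : ℤ) - (δ + 2))]
                have hb : ((a : ℤ) + δ + 2) * (a + δ + 2) ≤ (2 * K + 9) * (2 * K + 9) := by
                  have h1 : (0 : ℤ) ≤ (a : ℤ) + δ + 2 := by positivity
                  have h2 : (a : ℤ) + δ + 2 ≤ 2 * K + 9 := by linarith
                  exact mul_le_mul h2 h2 h1 (by linarith)
                nlinarith [hsq, hb]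
              · have hTlb : (2 : ℤ) * K + 9 ≤ (T (K + 4) : ℤ) := by nlinarith [hT]
                have hint1 : (a : ℤ) * (δ + 2) ≤ ((T (K + 4) : ℤ) - 1 - δ) * (δ + 2) := by
                  have h1 : (a : ℤ) ≤ (T (K + 4) : ℤ) - 1 - δ := by linarith
                  exact mul_le_mul_of_nonneg_right h1 (by positivity)
                have hint2 : (0 : ℤ) ≤ ((K : ℤ) + 3 - δ) * ((T (K + 4) : ℤ) - δ - K - 6) := by
                  apply mul_nonneg <;> linarith
                have hid : ((T (K + 4) : ℤ) - 1 - δ) * (δ + 2)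
                    + ((K : ℤ) + 3 - δ) * ((T (K + 4) : ℤ) - δ - K - 6)
                    = ((T (K + 4) : ℤ) - K - 4) * (K + 5) := by ring
                have hfin : (2 : ℤ) * (((T (K + 4) : ℤ) - K - 4) * (K + 5))
                    = (K + 3) * (K + 4) * (K + 5) := by linear_combination (K + 5 : ℤ) * hT
                nlinarith [hint1, hint2, hid, hfin]
            exact_mod_cast hgoal
          have hfact : (M - 2) * ((M - 1) * M) * Nat.factorial M' ≤ Nat.factorial M := by
            obtain ⟨K, rfl⟩ : ∃ K, M = K + 4 := ⟨M - 4, by omega⟩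
            rw [show K + 4 - 2 = K + 2 from rfl, show K + 4 - 1 = K + 3 from rfl]
            have h1 : Nat.factorial M' ≤ Nat.factorial (K + 1) := Nat.factorial_le (by omega)
            calc (K + 2) * ((K + 3) * (K + 4)) * Nat.factorial M'
                ≤ (K + 2) * ((K + 3) * (K + 4)) * Nat.factorial (K + 1) :=
                  Nat.mul_le_mul_left _ h1
              _ = Nat.factorial (K + 4) := by
                  rw [show K + 4 = (K + 3) + 1 from rfl, Nat.factorial_succ (K + 3),
                    show K + 3 = (K + 2) + 1 from rfl, Nat.factorial_succ (K + 2),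
                    show K + 2 = (K + 1) + 1 from rfl, Nat.factorial_succ (K + 1)]
                  ring
          calc (δ + 2) * (∏ x ∈ A, x) = (a * (δ + 2)) * ∏ x ∈ A.erase a, x := by
                rw [hprodA']; ring
            _ ≤ (2 * ((M - 2) * ((M - 1) * M))) * Nat.factorial M' :=
                Nat.mul_le_mul hmain hprod'
            _ = 2 * ((M - 2) * ((M - 1) * M) * Nat.factorial M') := by ring
            _ ≤ 2 * Nat.factorial M := Nat.mul_le_mul_left _ hfact
      · -- case a ≤ M : subset of Icc 1 M
        have hsub : A ⊆ Icc 1 M := by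
          intro x hx
          exact Finset.mem_Icc.mpr ⟨pos_of_mem h0 hx, le_trans (A.le_max' x hx) hsmall⟩
        have hsd := Finset.sum_sdiff (f := id) hsub
        have hpd := Finset.prod_sdiff (f := id) hsub
        simp only [id] at hsd hpd
        rw [sum_Icc_id] at hsd
        rw [prod_Icc_id] at hpd
        have h0m : 0 ∉ Icc 1 M \ A := fun h => by
          have h1 := (Finset.mem_Icc.mp (Finset.mem_sdiff.mp h).1).1; omega
        have hP1 := two_prod_ge (Icc 1 M \ A) h0m
        have hms : (∑ x ∈ Icc 1 M \ A, x) = δ + 1 := by omega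
        rw [hms] at hP1
        calc (δ + 2) * (∏ x ∈ A, x) ≤ (2 * ∏ x ∈ Icc 1 M \ A, x) * ∏ x ∈ A, x :=
              Nat.mul_le_mul_right _ hP1
          _ = 2 * ((∏ x ∈ Icc 1 M \ A, x) * ∏ x ∈ A, x) := by ring
          _ = 2 * Nat.factorial M := by rw [hpd]

lemma prod_le_factorial (A : Finset ℕ) (h0 : 0 ∉ A) (M : ℕ)
    (hs : (∑ a ∈ A, a) + 1 ≤ T M) : (∏ a ∈ A, a) ≤ Nat.factorial M := by
  have hex : ∃ t, (∑ a ∈ A, a) < T t := ⟨M, by omega⟩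
  have hle : Nat.find hex ≤ M := Nat.find_le (by omega)
  obtain ⟨M₀, hspec, hmin, hle⟩ :
      ∃ m, (∑ a ∈ A, a) < T m ∧ (∀ l, l < m → ¬ (∑ a ∈ A, a) < T l) ∧ m ≤ M :=
    ⟨Nat.find hex, Nat.find_spec hex, fun l hl => Nat.find_min hex hl, hle⟩
  have hM₀1 : 1 ≤ M₀ := by
    rcases Nat.eq_zero_or_pos M₀ with h | h
    · exfalso; rw [h] at hspec; simp [T] at hspec
    · exact h
  have hTM₀ : T M₀ = T (M₀ - 1) + M₀ := by
    have := T_succ (M₀ - 1); rw [Nat.sub_add_cancel hM₀1] at this; omega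
  have hmin' := hmin (M₀ - 1) (by omega)
  obtain ⟨δ, hδ⟩ : ∃ d, (∑ a ∈ A, a) + 1 + d = T M₀ := ⟨T M₀ - ((∑ a ∈ A, a) + 1), by omega⟩
  have hδM : δ + 1 ≤ M₀ := by omega
  have h := PTC A h0 M₀ δ hδ hδM
  have h2 : 2 * (∏ a ∈ A, a) ≤ (δ + 2) * (∏ a ∈ A, a) :=
    Nat.mul_le_mul_right _ (by omega)
  have h3 : (∏ a ∈ A, a) ≤ Nat.factorial M₀ := by omega
  exact le_trans h3 (Nat.factorial_le hle)

lemma PT (D : Finset ℕ) (h2 : ∀ d ∈ D, 2 ≤ d) (M : ℕ)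
    (hs : (∑ d ∈ D, d) + 1 ≤ T M) : (∏ d ∈ D, (d - 1)) ≤ Nat.factorial M := by
  have hinj : Set.InjOn (· - 1) D := by
    intro x hx y hy hxy
    have := h2 x hx; have := h2 y hy
    simp only at hxy; omega
  have hprod : (∏ a ∈ D.image (· - 1), a) = ∏ d ∈ D, (d - 1) :=
    Finset.prod_image fun x hx y hy hxy => hinj hx hy hxy
  have hsum : (∑ a ∈ D.image (· - 1), a) = ∑ d ∈ D, (d - 1) :=
    Finset.sum_image fun x hx y hy hxy => hinj hx hy hxy
  have h0 : 0 ∉ D.image (· - 1) := by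
    simp only [Finset.mem_image, not_exists]
    rintro x ⟨hx, hx0⟩
    have := h2 x hx; omega
  have hle : (∑ d ∈ D, (d - 1)) ≤ ∑ d ∈ D, d :=
    Finset.sum_le_sum fun i _ => Nat.sub_le i 1
  have := prod_le_factorial (D.image (· - 1)) h0 M (by omega)
  omega

open Finset Equiv

variable {n : ℕ}

def recordFinset (σ : Perm (Fin n)) : Finset (Fin n) :=
  Finset.univ.filter (fun j => IsRecordPos σ j)

/-- insert a value `v` at the last position -/
def ins (τ : Perm (Fin n)) (v : Fin (n + 1)) : Perm (Fin (n + 1)) :=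
  (finSuccEquivLast.trans ((Equiv.optionCongr τ).trans (finSuccEquiv' v).symm))

@[simp] lemma ins_castSucc (τ : Perm (Fin n)) (v : Fin (n + 1)) (i : Fin n) :
    ins τ v (Fin.castSucc i) = v.succAbove (τ i) := by
  simp [ins, finSuccEquivLast_castSucc]

@[simp] lemma ins_last (τ : Perm (Fin n)) (v : Fin (n + 1)) :
    ins τ v (Fin.last n) = v := by
  simp [ins, finSuccEquivLast_last]

lemma ins_injective : Function.Injective (fun p : Perm (Fin n) × Fin (n + 1) => ins p.1 p.2) := by
  rintro ⟨τ, v⟩ ⟨τ', v'⟩ h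
  simp only at h
  have hv : v = v' := by
    have := congrArg (fun σ : Perm (Fin (n+1)) => σ (Fin.last n)) h
    simpa using this
  subst hv
  have hτ : τ = τ' := by
    ext i
    have := congrArg (fun σ : Perm (Fin (n+1)) => σ (Fin.castSucc i)) h
    simp only [ins_castSucc] at this
    exact Fin.val_eq_of_eq (Fin.succAbove_right_injective this)
  simp [hτ]

lemma ins_bijective :
    Function.Bijective (fun p : Perm (Fin n) × Fin (n + 1) => ins p.1 p.2) := by
  rw [Fintype.bijective_iff_injective_and_card]
  refine ⟨ins_injective, ?_⟩
  simp [Fintype.card_perm, Nat.factorial_succ, mul_comm]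

lemma record_castSucc (τ : Perm (Fin n)) (v : Fin (n + 1)) (i : Fin n) :
    IsRecordPos (ins τ v) (Fin.castSucc i) ↔ IsRecordPos τ i := by
  constructor
  · intro h i' hi'
    have := h (Fin.castSucc i') (by exact Fin.castSucc_lt_castSucc_iff.mpr hi')
    simp only [ins_castSucc] at this
    exact (Fin.succAbove_lt_succAbove_iff).mp this
  · intro h j hj
    induction j using Fin.lastCases with
    | last => exact absurd (lt_trans hj (Fin.castSucc_lt_last i)) (lt_irrefl _)
    | cast i' =>
      simp only [ins_castSucc]
      exact Fin.succAbove_lt_succAbove_iff.mpr (h i' (Fin.castSucc_lt_castSucc_iff.mp hj))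

lemma record_last (τ : Perm (Fin n)) (v : Fin (n + 1)) :
    IsRecordPos (ins τ v) (Fin.last n) ↔ v = Fin.last n := by
  constructor
  · intro h
    by_contra hv
    have hvn : v.1 < n := by
      rcases Nat.lt_or_ge v.1 n with h' | h'
      · exact h'
      · exact absurd (Fin.eq_of_val_eq (by simp only [Fin.val_last]; omega : v.1 = (Fin.last n).1)) hv
    set x : Fin n := ⟨v.1, hvn⟩ with hx
    have hcast : Fin.castSucc x = v := by
      apply Fin.eq_of_val_eq; simp [hx]
    have hsa : v.succAbove x = x.succ := by
      rw [Fin.succAbove]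
      simp only [hcast]
      rw [if_neg (lt_irrefl v)]
    have := h (Fin.castSucc (τ.symm x)) (Fin.castSucc_lt_last _)
    simp only [ins_castSucc, ins_last, Equiv.apply_symm_apply, hsa] at this
    have : x.succ < v := this
    have h1 : x.succ.1 = v.1 + 1 := by simp [hx]
    omega
  · intro h j hj
    subst h
    induction j using Fin.lastCases with
    | last => exact absurd hj (lt_irrefl _)
    | cast i' =>
      simp only [ins_castSucc, ins_last, Fin.succAbove_last]
      exact Fin.castSucc_lt_last _

def pull (S : Finset (Fin (n + 1))) : Finset (Fin n) :=
  Finset.univ.filter (fun i => Fin.castSucc i ∈ S)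

lemma mem_recordFinset (σ : Perm (Fin n)) (j : Fin n) :
    j ∈ recordFinset σ ↔ IsRecordPos σ j := by
  simp [recordFinset]

lemma recordFinset_ins (τ : Perm (Fin n)) (v : Fin (n + 1)) (S : Finset (Fin (n + 1))) :
    recordFinset (ins τ v) = S ↔
      (recordFinset τ = pull S ∧ (v = Fin.last n ↔ Fin.last n ∈ S)) := by
  constructor
  · rintro rfl
    refine ⟨?_, ?_⟩
    · ext i
      simp only [mem_recordFinset, pull, Finset.mem_filter, Finset.mem_univ, true_and,
        mem_recordFinset]
      exact (record_castSucc τ v i).symm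
    · rw [mem_recordFinset]
      exact (record_last τ v).symm
  · rintro ⟨h1, h2⟩
    ext j
    induction j using Fin.lastCases with
    | last => rw [mem_recordFinset, record_last]; exact h2
    | cast i =>
      rw [mem_recordFinset, record_castSucc]
      have : i ∈ recordFinset τ ↔ i ∈ pull S := by rw [h1]
      simpa [mem_recordFinset, pull] using this

lemma card_filter_ins (p : Perm (Fin (n + 1)) → Prop) [DecidablePred p] :
    (Finset.univ.filter p).card
      = (Finset.univ.filter (fun q : Perm (Fin n) × Fin (n + 1) => p (ins q.1 q.2))).card := by
  classical
  rw [← Fintype.card_subtype, ← Fintype.card_subtype]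
  exact Fintype.card_congr
    ((Equiv.ofBijective _ ins_bijective).subtypeEquiv (fun q => Iff.rfl)).symm

lemma card_recordFinset_eq : ∀ (n : ℕ) (S : Finset (Fin n)),
    (Finset.univ.filter (fun σ : Perm (Fin n) => recordFinset σ = S)).card
      = ∏ j ∈ Sᶜ, (j.1 : ℕ) := by
  intro n
  induction n with
  | zero =>
    intro S
    have hS : S = (∅ : Finset (Fin 0)) := Subsingleton.elim _ _
    have hSc : Sᶜ = (∅ : Finset (Fin 0)) := Subsingleton.elim _ _
    rw [hSc, Finset.prod_empty]
    rw [Finset.filter_true_of_mem (fun σ _ => Subsingleton.elim _ _)]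
    simp
  | succ n ih =>
    intro S
    rw [card_filter_ins]
    have hcond : ∀ q : Perm (Fin n) × Fin (n + 1),
        (recordFinset (ins q.1 q.2) = S) ↔
          ((recordFinset q.1 = pull S) ∧ (q.2 = Fin.last n ↔ Fin.last n ∈ S)) :=
      fun q => recordFinset_ins q.1 q.2 S
    rw [Finset.filter_congr (fun q _ => by rw [hcond q])]
    rw [← Finset.univ_product_univ,
      Finset.filter_product (fun τ : Perm (Fin n) => recordFinset τ = pull S)
        (fun v : Fin (n+1) => v = Fin.last n ↔ Fin.last n ∈ S), Finset.card_product]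
    rw [ih (pull S)]
    have hcompl : ∀ (j : Fin (n+1)), j ∈ Sᶜ ↔ j ∉ S := fun j => Finset.mem_compl
    have hprodS : (∏ j ∈ Sᶜ, (j.1 : ℕ))
        = (∏ i ∈ (pull S)ᶜ, (i.1 : ℕ)) * (if Fin.last n ∈ S then 1 else n) := by
      have h1 : Sᶜ = Finset.univ.filter (fun j => j ∉ S) := by
        ext j; simp
      have h2 : (pull S)ᶜ = Finset.univ.filter (fun i => Fin.castSucc i ∉ S) := by
        ext i; simp [pull]
      rw [h1, h2, Finset.prod_filter, Finset.prod_filter, Fin.prod_univ_castSucc]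
      congr 1
      by_cases hlast : Fin.last n ∈ S <;> simp [hlast]
    rw [hprodS]
    congr 1
    by_cases hlast : Fin.last n ∈ S
    · have hfilter : (Finset.univ.filter (fun v : Fin (n+1) => v = Fin.last n ↔ Fin.last n ∈ S))
          = {Fin.last n} := by
        ext v; simp [hlast]
      rw [hfilter]
      simp [hlast]
    · have hfilter : (Finset.univ.filter (fun v : Fin (n+1) => v = Fin.last n ↔ Fin.last n ∈ S))
          = Finset.univ.erase (Fin.last n) := by
        ext v; simp [hlast]
      rw [hfilter, Finset.card_erase_of_mem (Finset.mem_univ _)]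
      simp [hlast]


def weight {n : ℕ} (S : Finset (Fin n)) : ℕ := ∑ j ∈ S, (j.1 + 1)

lemma srec_eq {n : ℕ} (σ : Equiv.Perm (Fin n)) : srec σ = weight (recordFinset σ) := rfl

lemma srecCount_eq_sum (n k : ℕ) :
    srecCount n k
      = ∑ S ∈ Finset.univ.filter (fun S : Finset (Fin n) => weight S = k),
          ∏ j ∈ Sᶜ, (j.1 : ℕ) := by
  classical
  unfold srecCount
  rw [Finset.card_eq_sum_card_fiberwise
    (f := recordFinset)
    (t := Finset.univ.filter (fun S : Finset (Fin n) => weight S = k))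
    (fun σ hσ => by
      simp only [Finset.coe_filter, Finset.mem_coe, Finset.mem_filter, Finset.mem_univ, true_and, Set.mem_setOf_eq] at hσ ⊢
      rw [← srec_eq]; exact hσ)]
  apply Finset.sum_congr rfl
  intro S hS
  simp only [Finset.mem_filter, Finset.mem_univ, true_and] at hS
  rw [← card_recordFinset_eq]
  congr 1
  ext σ
  simp only [Finset.mem_filter, Finset.mem_univ, true_and, srec_eq]
  constructor
  · rintro ⟨h1, h2⟩; exact h2
  · rintro rfl; exact ⟨Finset.mem_filter.mpr ⟨Finset.mem_univ _, hS⟩, rfl⟩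

lemma weight_univ (n : ℕ) : weight (Finset.univ : Finset (Fin n)) = T n := by
  induction n with
  | zero => simp [weight, T]
  | succ n ih =>
    have h1 := T_succ n
    unfold weight at *
    rw [Fin.sum_univ_castSucc]
    simp only [Fin.coe_castSucc, Fin.val_last]
    rw [ih]
    omega

lemma weight_compl {n : ℕ} (S : Finset (Fin n)) : weight S + weight Sᶜ = T n := by
  unfold weight
  rw [Finset.sum_add_sum_compl, ← weight_univ n]
  rfl

lemma transfer_sum {n : ℕ} (Dnat : Finset ℕ) (hD : ∀ d ∈ Dnat, 2 ≤ d ∧ d ≤ n) :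
    (∑ j ∈ Finset.univ.filter (fun j : Fin n => j.1 + 1 ∈ Dnat), (j.1 + 1))
      = ∑ d ∈ Dnat, d := by
  refine Finset.sum_bij' (i := fun (j : Fin n) (_ : j ∈ _) => j.1 + 1)
    (j := fun (d : ℕ) (hd : d ∈ Dnat) => (⟨d - 1, by have h1 := (hD d hd).1; have h2 := (hD d hd).2; omega⟩ : Fin n))
    ?_ ?_ ?_ ?_ ?_
  · intro a ha; simpa using ha
  · intro d hd
    simp only [Finset.mem_filter, Finset.mem_univ, true_and]
    have h2 := (hD d hd).1
    have h : d - 1 + 1 = d := by omega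
    rw [h]; exact hd
  · intro a ha; apply Fin.eq_of_val_eq; simp
  · intro d hd; have := (hD d hd).1; simp; omega
  · intro a ha; rfl

lemma transfer_prod {n : ℕ} (Dnat : Finset ℕ) (hD : ∀ d ∈ Dnat, 2 ≤ d ∧ d ≤ n) :
    (∏ j ∈ Finset.univ.filter (fun j : Fin n => j.1 + 1 ∈ Dnat), (j.1 : ℕ))
      = ∏ d ∈ Dnat, (d - 1) := by
  refine Finset.prod_bij' (i := fun (j : Fin n) (_ : j ∈ _) => j.1 + 1)
    (j := fun (d : ℕ) (hd : d ∈ Dnat) => (⟨d - 1, by have h1 := (hD d hd).1; have h2 := (hD d hd).2; omega⟩ : Fin n))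
    ?_ ?_ ?_ ?_ ?_
  · intro a ha; simpa using ha
  · intro d hd
    simp only [Finset.mem_filter, Finset.mem_univ, true_and]
    have h2 := (hD d hd).1
    have h : d - 1 + 1 = d := by omega
    rw [h]; exact hd
  · intro a ha; apply Fin.eq_of_val_eq; simp
  · intro d hd; have := (hD d hd).1; simp; omega
  · intro a ha; rfl

lemma sum_range_sub (n : ℕ) : ∀ t, t ≤ n → (∑ i ∈ Finset.range t, (n - i)) + T (n - t) = T n := by
  intro t
  induction t with
  | zero => intro _; simp
  | succ t ih =>
    intro ht
    rw [Finset.sum_range_succ]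
    have h1 := ih (by omega)
    have h2 : T (n - t) = T (n - (t + 1)) + (n - t) := by
      have := T_succ (n - (t + 1))
      rw [show n - (t + 1) + 1 = n - t by omega] at this
      omega
    omega

lemma sum_Icc2 (m : ℕ) (hm : 1 ≤ m) : (∑ d ∈ Icc 2 m, d) + 1 = T m := by
  have h1 : (1 : ℕ) ∈ Icc 1 m := Finset.mem_Icc.mpr ⟨le_rfl, hm⟩
  have h2 := Finset.add_sum_erase (Icc 1 m) id h1
  have herase : (Icc 1 m).erase 1 = Icc 2 m := by
    ext x; simp only [Finset.mem_erase, Finset.mem_Icc]; omega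
  simp only [id] at h2
  rw [herase, sum_Icc_id] at h2
  omega

lemma prod_Icc2 (m : ℕ) : (∏ d ∈ Icc 2 (m + 1), (d - 1)) = Nat.factorial m := by
  induction m with
  | zero =>
    rw [show (2 : ℕ) = 1 + 1 from rfl, Finset.Icc_eq_empty (by omega)]
    simp [Nat.factorial]
  | succ m ih =>
    rw [Finset.prod_Icc_succ_top (by omega : 2 ≤ m + 1 + 1), ih]
    rw [show m + 1 + 1 - 1 = m + 1 from rfl, Nat.factorial_succ]
    ring

/-- the lower-bound construction -/
lemma construct (n m Tk : ℕ) (hm1 : 1 ≤ m) (hmn : m + 1 ≤ n)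
    (hub : Tk + 1 ≤ T m) (hlb : T (m - 1) ≤ Tk) (hne : Tk ≠ 1) :
    ∃ D : Finset ℕ, (∀ d ∈ D, 2 ≤ d ∧ d ≤ n) ∧ (∑ d ∈ D, d) = Tk ∧
      Nat.factorial m ≤ n * (n + 1) * ∏ d ∈ D, (d - 1) := by
  have hTm : T m = T (m - 1) + m := by
    have := T_succ (m - 1); rw [Nat.sub_add_cancel hm1] at this; omega
  rcases (by omega : m = 1 ∨ 2 ≤ m) with hm | hm
  · -- m = 1 : Tk = 0, D = ∅
    subst hm
    have hT1 : T 1 = 1 := rfl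
    have hTk0 : Tk = 0 := by omega
    refine ⟨∅, by simp, by simp [hTk0], ?_⟩
    simp [Nat.factorial]
    nlinarith
  · obtain ⟨x, hx⟩ : ∃ x, Tk + x = T m - 1 := ⟨T m - 1 - Tk, by omega⟩
    have hxm : x ≤ m - 1 := by omega
    rcases (by omega : x = 0 ∨ x = 1 ∨ 2 ≤ x) with h | h | h
    · -- D = Icc 2 m
      subst h
      obtain ⟨M, rfl⟩ : ∃ M, m = M + 2 := ⟨m - 2, by omega⟩
      refine ⟨Icc 2 (M + 2), ?_, ?_, ?_⟩
      · intro d hd; have := Finset.mem_Icc.mp hd; omega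
      · have := sum_Icc2 (M + 2) (by omega); omega
      · rw [show M + 2 = (M + 1) + 1 from rfl, prod_Icc2 (M + 1)]
        rw [show Nat.factorial (M + 2) = (M + 2) * Nat.factorial (M + 1) from
          Nat.factorial_succ (M + 1)]
        have h1 : M + 2 ≤ n * (n + 1) := by nlinarith
        exact Nat.mul_le_mul_right _ h1
    · -- x = 1 : Tk = T m - 2, need m ≥ 3, D = insert (m+1) (Icc 3 (m-1))
      subst h
      have hm3 : 3 ≤ m := by
        rcases (by omega : m = 2 ∨ 3 ≤ m) with h | h
        · exfalso; subst h; have : T 2 = 3 := rfl; omega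
        · exact h
      obtain ⟨M, rfl⟩ : ∃ M, m = M + 3 := ⟨m - 3, by omega⟩
      have hnotmem : (M + 3 + 1) ∉ Icc 3 (M + 2) := by
        simp only [Finset.mem_Icc]; omega
      have herase : (Icc 2 (M + 2)).erase 2 = Icc 3 (M + 2) := by
        ext y; simp only [Finset.mem_erase, Finset.mem_Icc]; omega
      have hsum3 : (∑ d ∈ Icc 3 (M + 2), d) + 3 = T (M + 2) := by
        have h2mem : (2 : ℕ) ∈ Icc 2 (M + 2) := Finset.mem_Icc.mpr ⟨le_rfl, by omega⟩
        have h2 := Finset.add_sum_erase (Icc 2 (M + 2)) id h2mem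
        simp only [id] at h2
        rw [herase] at h2
        have := sum_Icc2 (M + 2) (by omega)
        omega
      have hprod3 : (∏ d ∈ Icc 3 (M + 2), (d - 1)) = Nat.factorial (M + 1) := by
        rw [← herase, Finset.prod_erase _ (by norm_num), show M + 2 = (M + 1) + 1 from rfl,
          prod_Icc2 (M + 1)]
      refine ⟨insert (M + 3 + 1) (Icc 3 (M + 2)), ?_, ?_, ?_⟩
      · intro d hd
        rcases Finset.mem_insert.mp hd with rfl | hd
        · omega
        · have := Finset.mem_Icc.mp hd; omega
      · rw [Finset.sum_insert hnotmem]
        have hTm' : T (M + 3) = T (M + 2) + (M + 3) := T_succ (M + 2)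
        omega
      · rw [Finset.prod_insert hnotmem, hprod3]
        rw [show M + 3 + 1 - 1 = M + 3 from rfl]
        have hfac : Nat.factorial (M + 3) = (M + 2) * ((M + 3) * Nat.factorial (M + 1)) := by
          rw [Nat.factorial_succ (M + 2), Nat.factorial_succ (M + 1)]; ring
        rw [hfac]
        have h1 : M + 2 ≤ n * (n + 1) := by nlinarith
        calc (M + 2) * ((M + 3) * Nat.factorial (M + 1))
            ≤ (n * (n + 1)) * ((M + 3) * Nat.factorial (M + 1)) :=
              Nat.mul_le_mul_right _ h1
          _ = n * (n + 1) * ((M + 3) * Nat.factorial (M + 1)) := by ring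
    · -- x ≥ 2 : D = (Icc 2 m).erase x
      obtain ⟨M, rfl⟩ : ∃ M, m = M + 2 := ⟨m - 2, by omega⟩
      have hxmem : x ∈ Icc 2 (M + 2) := Finset.mem_Icc.mpr ⟨h, by omega⟩
      refine ⟨(Icc 2 (M + 2)).erase x, ?_, ?_, ?_⟩
      · intro d hd
        have := Finset.mem_Icc.mp (Finset.mem_of_mem_erase hd); omega
      · have h2 := Finset.add_sum_erase (Icc 2 (M + 2)) id hxmem
        simp only [id] at h2
        have := sum_Icc2 (M + 2) (by omega)
        omega
      · have hprodx := Finset.mul_prod_erase (Icc 2 (M + 2)) (fun d => d - 1) hxmem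
        rw [show M + 2 = (M + 1) + 1 from rfl, prod_Icc2 (M + 1)] at hprodx
        have hprodx' : (x - 1) * (∏ d ∈ (Icc 2 (M + 2)).erase x, (d - 1))
            = Nat.factorial (M + 1) := by simpa using hprodx
        have hxpos : 1 ≤ x - 1 := by omega
        apply Nat.le_of_mul_le_mul_right _ hxpos
        obtain ⟨x2, rfl⟩ : ∃ x2, x = x2 + 2 := ⟨x - 2, by omega⟩
        calc Nat.factorial (M + 2) * (x2 + 2 - 1)
            = ((M + 2) * (x2 + 1)) * Nat.factorial (M + 1) := by
              rw [Nat.factorial_succ (M + 1), show x2 + 2 - 1 = x2 + 1 from rfl]; ring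
          _ ≤ (n * (n + 1)) * Nat.factorial (M + 1) := by
              apply Nat.mul_le_mul_right
              have hb : (M + 2) * (x2 + 1) ≤ n * n := Nat.mul_le_mul (by omega) (by omega)
              nlinarith [hb]
          _ = (n * (n + 1) * ∏ d ∈ (Icc 2 (M + 2)).erase (x2 + 2), (d - 1)) * (x2 + 2 - 1) := by
              rw [← hprodx', show x2 + 2 - 1 = x2 + 1 from rfl]; ring

lemma per_S_bound (n k M : ℕ) (hn : 1 ≤ n) (hkn : k ≤ T n)
    (hsum : (T n - k) + 1 ≤ T M) (S : Finset (Fin n)) (hw : weight S = k) :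
    (∏ j ∈ Sᶜ, (j.1 : ℕ)) ≤ Nat.factorial M := by
  by_cases h0 : (⟨0, hn⟩ : Fin n) ∈ Sᶜ
  · have : (∏ j ∈ Sᶜ, (j.1 : ℕ)) = 0 := Finset.prod_eq_zero h0 rfl
    rw [this]; exact Nat.zero_le _
  · set Dnat := Sᶜ.image (fun j : Fin n => j.1 + 1) with hDnat
    have hD : ∀ d ∈ Dnat, 2 ≤ d ∧ d ≤ n := by
      intro d hd
      obtain ⟨j, hj, rfl⟩ := Finset.mem_image.mp hd
      constructor
      · rcases Nat.eq_zero_or_pos j.1 with hj0 | hj0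
        · exfalso; apply h0
          have : j = (⟨0, hn⟩ : Fin n) := Fin.eq_of_val_eq hj0
          rwa [← this]
        · omega
      · exact j.2
    have hfilter : Finset.univ.filter (fun j : Fin n => j.1 + 1 ∈ Dnat) = Sᶜ := by
      ext j
      simp only [Finset.mem_filter, Finset.mem_univ, true_and, hDnat, Finset.mem_image]
      constructor
      · rintro ⟨j', hj', hval⟩
        have : j' = j := Fin.eq_of_val_eq (by omega)
        rwa [← this]
      · intro hj; exact ⟨j, hj, rfl⟩
    have hps := transfer_prod Dnat hD
    have hss := transfer_sum Dnat hD
    rw [hfilter] at hps hss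
    have hwc : weight S + weight Sᶜ = T n := weight_compl S
    have hsumD : (∑ d ∈ Dnat, d) = T n - k := by
      unfold weight at hwc hw
      omega
    rw [hps]
    exact PT Dnat (fun d hd => (hD d hd).1) M (by omega)

end SrecAux

open SrecAux in
/-- For `n+1 ≤ k ≤ n(n+1)/2`, `k ≠ n(n+1)/2 - 1`, with `i₀` the greatest integer
such that `k - 1 ≥ n + (n-1) + ⋯ + (n-i₀)`:
`(n-i₀-1)!/(n·eⁿ) ≤ C(n,k) ≤ 2ⁿ·(n-i₀-1)!`. -/
theorem srecCount_bounds_large_k (n k : ℕ) (hk1 : n + 1 ≤ k)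
    (hk2 : k ≤ n * (n + 1) / 2) (hk3 : k ≠ n * (n + 1) / 2 - 1)
    (i₀ : ℕ) (hi₀ : ∑ i ∈ Finset.range (i₀ + 1), (n - i) ≤ k - 1)
    (hi₀' : ¬ (∑ i ∈ Finset.range (i₀ + 2), (n - i) ≤ k - 1)) :
    (Nat.factorial (n - i₀ - 1) : ℝ) / ((n : ℝ) * Real.exp n) ≤
        (srecCount n k : ℝ) ∧
      (srecCount n k : ℝ) ≤ (2 : ℝ) ^ n * Nat.factorial (n - i₀ - 1) := by
  classical
  have hTn : k ≤ T n := hk2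
  have hk3' : k ≠ T n - 1 := hk3
  have h2T := two_T n
  -- n ≥ 2
  have hn2 : 2 ≤ n := by
    rcases (by omega : 2 ≤ n ∨ n = 0 ∨ n = 1) with h | h | h
    · exact h
    · exfalso; subst h; have : T 0 = 0 := rfl; omega
    · exfalso; subst h; have : T 1 = 1 := rfl; omega
  -- i₀ + 2 ≤ n
  have hT0 : T 0 = 0 := rfl
  have hi02 : i₀ + 2 ≤ n := by
    by_contra hc
    have hsub : Finset.range n ⊆ Finset.range (i₀ + 1) := by
      apply Finset.range_subset_range.mpr; omega
    have heq : (∑ i ∈ Finset.range (i₀ + 1), (n - i)) = ∑ i ∈ Finset.range n, (n - i) :=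
      (Finset.sum_subset hsub (fun x _ hx => by
        simp only [Finset.mem_range, not_lt] at hx; omega)).symm
    have h0 := sum_range_sub n n le_rfl
    rw [Nat.sub_self] at h0
    omega
  set m := n - i₀ - 1 with hm
  have hm1 : 1 ≤ m := by omega
  have hmn : m + 1 ≤ n := by omega
  have e1 : n - (i₀ + 1) = m := by omega
  have e2 : n - (i₀ + 2) = m - 1 := by omega
  have h1 := sum_range_sub n (i₀ + 1) (by omega)
  rw [e1] at h1
  have h2 := sum_range_sub n (i₀ + 2) (by omega)
  rw [e2] at h2
  obtain ⟨Tk, hTk⟩ : ∃ t, k + t = T n := ⟨T n - k, by omega⟩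
  have hTkub : Tk + 1 ≤ T m := by omega
  have hTklb : T (m - 1) ≤ Tk := by omega
  have hTk1 : Tk ≠ 1 := by omega
  -- upper bound (ℕ)
  have hupper : srecCount n k ≤ 2 ^ n * Nat.factorial m := by
    rw [srecCount_eq_sum n k]
    calc (∑ S ∈ Finset.univ.filter (fun S : Finset (Fin n) => weight S = k),
            ∏ j ∈ Sᶜ, (j.1 : ℕ))
        ≤ ∑ S ∈ Finset.univ.filter (fun S : Finset (Fin n) => weight S = k),
            Nat.factorial m := by
          apply Finset.sum_le_sum
          intro S hS
          simp only [Finset.mem_filter, Finset.mem_univ, true_and] at hS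
          exact per_S_bound n k m (by omega) hTn (by omega) S hS
      _ = (Finset.univ.filter (fun S : Finset (Fin n) => weight S = k)).card
            * Nat.factorial m := by rw [Finset.sum_const, smul_eq_mul]
      _ ≤ 2 ^ n * Nat.factorial m := by
          apply Nat.mul_le_mul_right
          calc (Finset.univ.filter (fun S : Finset (Fin n) => weight S = k)).card
              ≤ (Finset.univ : Finset (Finset (Fin n))).card := Finset.card_filter_le _ _
            _ = 2 ^ n := by rw [Finset.card_univ, Fintype.card_finset, Fintype.card_fin]
  -- lower bound construction
  obtain ⟨Dnat, hDel, hDsum, hDprodge⟩ := construct n m Tk hm1 hmn hTkub hTklb hTk1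
  set Dfin := Finset.univ.filter (fun j : Fin n => j.1 + 1 ∈ Dnat) with hDfin
  set S := Dfinᶜ with hS
  have hScompl : Sᶜ = Dfin := compl_compl Dfin
  have hsumD := transfer_sum Dnat hDel
  have hprodD := transfer_prod Dnat hDel
  have hwS : weight S = k := by
    have hwc := weight_compl S
    rw [hScompl] at hwc
    have : weight Dfin = Tk := by
      unfold weight
      rw [hDfin, hsumD, hDsum]
    omega
  have hmem : S ∈ Finset.univ.filter (fun S : Finset (Fin n) => weight S = k) := by
    simp only [Finset.mem_filter, Finset.mem_univ, true_and]; exact hwS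
  have hlow : (∏ d ∈ Dnat, (d - 1)) ≤ srecCount n k := by
    rw [srecCount_eq_sum n k]
    have h0 := Finset.single_le_sum
      (f := fun S : Finset (Fin n) => ∏ j ∈ Sᶜ, (j.1 : ℕ))
      (fun i _ => Nat.zero_le _) hmem
    have h : (∏ j ∈ Sᶜ, (j.1 : ℕ))
        ≤ ∑ S ∈ Finset.univ.filter (fun S : Finset (Fin n) => weight S = k),
            ∏ j ∈ Sᶜ, (j.1 : ℕ) := h0
    rw [hScompl, hDfin, hprodD] at h
    exact h
  -- conclude
  constructor
  · -- lower bound (ℝ)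
    have hnR : (0 : ℝ) < (n : ℝ) * Real.exp n := by
      apply mul_pos
      · exact_mod_cast (by omega : 0 < n)
      · exact Real.exp_pos _
    rw [div_le_iff₀ hnR]
    have hexp : ((n : ℝ) + 1) ≤ Real.exp n := by
      have := Real.add_one_le_exp (n : ℝ)
      linarith
    have hP : ((∏ d ∈ Dnat, (d - 1) : ℕ) : ℝ) ≤ (srecCount n k : ℝ) :=
      Nat.cast_le.mpr hlow
    have h1 : (Nat.factorial m : ℝ)
        ≤ (n : ℝ) * (((n : ℝ) + 1) * ((∏ d ∈ Dnat, (d - 1) : ℕ) : ℝ)) := by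
      calc (Nat.factorial m : ℝ)
          ≤ ((n * (n + 1) * ∏ d ∈ Dnat, (d - 1) : ℕ) : ℝ) := Nat.cast_le.mpr hDprodge
        _ = (n : ℝ) * (((n : ℝ) + 1) * ((∏ d ∈ Dnat, (d - 1) : ℕ) : ℝ)) := by
            push_cast; ring
    have h2 : ((n : ℝ) + 1) * ((∏ d ∈ Dnat, (d - 1) : ℕ) : ℝ)
        ≤ Real.exp n * (srecCount n k : ℝ) := by
      apply mul_le_mul hexp hP (by positivity)
      exact le_of_lt (Real.exp_pos _)
    calc (Nat.factorial (n - i₀ - 1) : ℝ)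
        = (Nat.factorial m : ℝ) := by rw [hm]
      _ ≤ (n : ℝ) * (((n : ℝ) + 1) * ((∏ d ∈ Dnat, (d - 1) : ℕ) : ℝ)) := h1
      _ ≤ (n : ℝ) * (Real.exp n * (srecCount n k : ℝ)) := by
          apply mul_le_mul_of_nonneg_left h2 (by positivity)
      _ = (srecCount n k : ℝ) * ((n : ℝ) * Real.exp n) := by ring
  · -- upper bound (ℝ)
    calc (srecCount n k : ℝ) ≤ ((2 ^ n * Nat.factorial m : ℕ) : ℝ) := by exact_mod_cast hupper
      _ = (2 : ℝ) ^ n * Nat.factorial (n - i₀ - 1) := by push_cast [hm]; ring
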